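/- Let K be an algebraically closed field and σ a K-linear automorphism of 𝒞ₙ. Then there exists a multiplicative basis (x_{ij}) of 𝒞ₙ whose transition coefficients a_{ij} for σ (defined by σ(x_{ij}) = a_{ij}·x_{σ(i)σ(j)}) satisfy: (1) a_{ij} = 1 whenever i and j lie in the same orbit of the object permutation of σ, and (2) a_{ij} = a_{kl} whenever i,k lie in the same orbit and j,l lie in the same orbit of σ. Furthermore, condition (1) implies condition (2). -/

import Mathlib

open CategoryTheory

/-- The category `𝒞ₙ`: objects are `Fin n`, every hom-space is the one-dimensional
`K`-vector space `K`, and composition is multiplication in `K` (so the identity of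
every object is `1 : K`). -/
def Cn (K : Type) (n : ℕ) : Type := Fin n

section CnSetup

variable {K : Type} [Field K] {n : ℕ}

instance : Category (Cn K n) where
  Hom _ _ := K
  id _ := (1 : K)
  comp f g := @HMul.hMul K K K _ f g
  id_comp f := @one_mul K _ f
  comp_id f := @mul_one K _ f
  assoc f g h := @mul_assoc K _ f g h

instance : Preadditive (Cn K n) where
  homGroup _ _ := inferInstanceAs (AddCommGroup K)
  add_comp _ _ _ f f' g := @add_mul K _ _ _ f f' g
  comp_add _ _ _ f g g' := @mul_add K _ _ _ f g g'

instance : CategoryTheory.Linear K (Cn K n) where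
  homModule _ _ := inferInstanceAs (Module K K)
  smul_comp _ _ _ r f g := @smul_mul_assoc K K _ _ _ r f g
  comp_smul _ _ _ f r g := @mul_smul_comm K K _ _ _ r f g

/-- The morphism `X ⟶ Y` of `𝒞ₙ` given by the scalar `r`.  In particular
`CnHom j i 1` is the canonical basic morphism `x_{ij} : j ⟶ i`. -/
def CnHom (X Y : Cn K n) (r : K) : X ⟶ Y := r

/-- The scalar underlying a morphism of `𝒞ₙ`. -/
def toK {X Y : Cn K n} (f : X ⟶ Y) : K := f

end CnSetup

/-- A functor between `K`-linear categories is `K`-linear if it is additive on hom-spaces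
and commutes with the action of `K` on hom-spaces. -/
def IsKLinearFunctor (K : Type) [Field K] {C D : Type*} [Category C] [Category D]
    [Preadditive C] [Preadditive D] [CategoryTheory.Linear K C] [CategoryTheory.Linear K D]
    (F : C ⥤ D) : Prop :=
  (∀ (X Y : C) (f g : X ⟶ Y), F.map (f + g) = F.map f + F.map g) ∧
  (∀ (X Y : C) (r : K) (f : X ⟶ Y), F.map (r • f) = r • F.map f)

/-- `i` and `j` lie in the same orbit of the permutation `π`. -/
def SameOrbit {N : ℕ} (π : Equiv.Perm (Fin N)) (i j : Fin N) : Prop :=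
  ∃ k : ℕ, (π ^ k) i = j

/-- The number of elements of the orbit of `i` under the permutation `π`. -/
noncomputable def orbitSize {N : ℕ} (π : Equiv.Perm (Fin N)) (i : Fin N) : ℕ :=
  Set.ncard {j | SameOrbit π i j}

/-- `x` is a multiplicative basis for `𝒞_N` whose transition coefficients for the
`K`-linear automorphism `σ` (with underlying object permutation `σp`) are the scalars
`a i j` (i.e. `σ (x_{ij}) = a_{ij} • x_{σ(i) σ(j)}`), and these coefficients equal `1`
whenever `i` and `j` lie in the same `σp`-orbit: a *good basis* for `(𝒞_N, σ)`. -/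
def IsGoodBasis {K : Type} [Field K] {N : ℕ} (σ : Cn K N ⥤ Cn K N)
    (σp : Equiv.Perm (Fin N)) (x a : Cn K N → Cn K N → K) : Prop :=
  (∀ i j, x i j ≠ 0) ∧ (∀ i j k, x i j * x j k = x i k) ∧ (∀ i j, a i j ≠ 0) ∧
  (∀ i j : Cn K N, σ.map (CnHom j i (x i j)) =
    CnHom (σ.obj j) (σ.obj i) (a i j * x (σp i) (σp j))) ∧
  (∀ i j : Fin N, SameOrbit σp i j → a i j = 1)


section OrbAux
variable {N : ℕ} (π : Equiv.Perm (Fin N))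

lemma sameOrbit_refl (i : Fin N) : SameOrbit π i i := ⟨0, rfl⟩

lemma sameOrbit_trans {i j k : Fin N} (h1 : SameOrbit π i j) (h2 : SameOrbit π j k) :
    SameOrbit π i k := by
  obtain ⟨a, ha⟩ := h1; obtain ⟨b, hb⟩ := h2
  exact ⟨b + a, by rw [pow_add, Equiv.Perm.mul_apply, ha, hb]⟩

lemma sameOrbit_symm {i j : Fin N} (h : SameOrbit π i j) : SameOrbit π j i := by
  obtain ⟨k, hk⟩ := h
  have hM : 0 < orderOf π := orderOf_pos π
  have hM1 : π ^ orderOf π = 1 := pow_orderOf_eq_one π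
  set M := orderOf π with hMdef
  refine ⟨M - k % M, ?_⟩
  have hdvd : M ∣ (M - k % M + k) := by
    have h1 := Nat.div_add_mod k M
    have h2 := Nat.mod_lt k hM
    refine ⟨1 + k / M, ?_⟩
    rw [Nat.mul_add, Nat.mul_one]
    omega
  have hone : π ^ (M - k % M + k) = 1 := by
    obtain ⟨q, hq⟩ := hdvd
    rw [hq, pow_mul, hM1, one_pow]
  calc (π ^ (M - k % M)) j = (π ^ (M - k % M)) ((π ^ k) i) := by rw [hk]
    _ = (π ^ (M - k % M + k)) i := by rw [pow_add, Equiv.Perm.mul_apply]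
    _ = i := by rw [hone]; rfl

end OrbAux

lemma key_tlam {K : Type} [Field K] [IsAlgClosed K] {n : ℕ} (σp : Equiv.Perm (Fin n))
    (u : Fin n → K) (hu : ∀ i, u i ≠ 0) :
    ∃ t lam : Fin n → K, (∀ i, t i ≠ 0) ∧ (∀ i, lam i ≠ 0) ∧
      (∀ i, u i * t i = lam i * t (σp i)) ∧
      (∀ i j, SameOrbit σp i j → lam i = lam j) := by
  classical
  have hSne : ∀ i : Fin n, (Finset.univ.filter fun j => SameOrbit σp i j).Nonempty :=
    fun i => ⟨i, by simp [sameOrbit_refl]⟩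
  set rep : Fin n → Fin n := fun i => (Finset.univ.filter fun j => SameOrbit σp i j).min' (hSne i)
    with hrepdef
  have hrep_orbit : ∀ i, SameOrbit σp i (rep i) :=
    fun i => (Finset.mem_filter.1 (Finset.min'_mem _ (hSne i))).2
  have hrep_eq : ∀ i j, SameOrbit σp i j → rep i = rep j := by
    intro i j h
    have hset : (Finset.univ.filter fun l => SameOrbit σp i l)
        = (Finset.univ.filter fun l => SameOrbit σp j l) := by
      ext l
      simp only [Finset.mem_filter, Finset.mem_univ, true_and]
      exact ⟨fun hl => sameOrbit_trans σp (sameOrbit_symm σp h) hl,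
             fun hl => sameOrbit_trans σp h hl⟩
    simp only [hrepdef, hset]
  have hex : ∀ i, ∃ k, (σp ^ k) (rep i) = i := fun i => sameOrbit_symm σp (hrep_orbit i)
  set kof : Fin n → ℕ := fun i => Nat.find (hex i)
  have hkof : ∀ i, (σp ^ kof i) (rep i) = i := fun i => Nat.find_spec (hex i)
  have hkof_min : ∀ i k, k < kof i → (σp ^ k) (rep i) ≠ i := fun i k hk => Nat.find_min (hex i) hk
  have hkof_eq : ∀ (i : Fin n) (m : ℕ), (σp ^ m) (rep i) = i →
      (∀ k, k < m → (σp ^ k) (rep i) ≠ i) → kof i = m := by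
    intro i m h1 h2
    show Nat.find (hex i) = m
    rw [Nat.find_eq_iff]
    exact ⟨h1, fun k hk => h2 k hk⟩
  have hexp : ∀ ρ : Fin n, ∃ p, 0 < p ∧ (σp ^ p) ρ = ρ :=
    fun ρ => ⟨orderOf σp, orderOf_pos σp, by rw [pow_orderOf_eq_one]; rfl⟩
  set perR : Fin n → ℕ := fun ρ => Nat.find (hexp ρ)
  have hper_pos : ∀ ρ, 0 < perR ρ := fun ρ => (Nat.find_spec (hexp ρ)).1
  have hper_fix : ∀ ρ, (σp ^ perR ρ) ρ = ρ := fun ρ => (Nat.find_spec (hexp ρ)).2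
  have hper_min : ∀ ρ k, 0 < k → k < perR ρ → (σp ^ k) ρ ≠ ρ :=
    fun ρ k hk1 hk2 hcon => Nat.find_min (hexp ρ) hk2 ⟨hk1, hcon⟩
  have hmulfix : ∀ ρ q, (σp ^ (perR ρ * q)) ρ = ρ := by
    intro ρ q
    induction q with
    | zero => rfl
    | succ m ih =>
      rw [Nat.mul_succ, pow_add, Equiv.Perm.mul_apply, hper_fix, ih]
  have hmod : ∀ ρ a, (σp ^ a) ρ = (σp ^ (a % perR ρ)) ρ := by
    intro ρ a
    conv_lhs => rw [← Nat.mod_add_div a (perR ρ)]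
    rw [pow_add, Equiv.Perm.mul_apply, hmulfix]
  have hkof_lt : ∀ i, kof i < perR (rep i) := by
    intro i
    have h1 : (σp ^ (kof i % perR (rep i))) (rep i) = i := by rw [← hmod]; exact hkof i
    exact lt_of_le_of_lt (Nat.find_min' (hex i) h1) (Nat.mod_lt _ (hper_pos _))
  set PR : Fin n → K := fun ρ => ∏ j ∈ Finset.range (perR ρ), u ((σp ^ j) ρ) with hPRdef
  have hPRne : ∀ ρ, PR ρ ≠ 0 := fun ρ => Finset.prod_ne_zero_iff.2 fun _ _ => hu _
  have hroot : ∀ ρ, ∃ l : K, l ^ perR ρ = PR ρ :=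
    fun ρ => IsAlgClosed.exists_pow_nat_eq (PR ρ) (hper_pos ρ)
  set lamR : Fin n → K := fun ρ => Classical.choose (hroot ρ)
  have hlamR : ∀ ρ, lamR ρ ^ perR ρ = PR ρ := fun ρ => Classical.choose_spec (hroot ρ)
  have hlamRne : ∀ ρ, lamR ρ ≠ 0 := by
    intro ρ h
    exact hPRne ρ (by rw [← hlamR ρ, h, zero_pow (hper_pos ρ).ne'])
  set t : Fin n → K :=
    fun i => (∏ j ∈ Finset.range (kof i), u ((σp ^ j) (rep i))) / lamR (rep i) ^ kof i with htdef
  set lam : Fin n → K := fun i => lamR (rep i) with hlamdef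
  have hlami : ∀ i, lam i = lamR (rep i) := fun _ => rfl
  refine ⟨t, lam, ?_, fun i => hlamRne _, ?_, ?_⟩
  · intro i
    exact div_ne_zero (Finset.prod_ne_zero_iff.2 fun _ _ => hu _) (pow_ne_zero _ (hlamRne _))
  · intro i
    have hrepσ : rep (σp i) = rep i := (hrep_eq i (σp i) ⟨1, by simp⟩).symm
    have hui : u i = u ((σp ^ kof i) (rep i)) := by rw [hkof]
    have htσ : t (σp i) = (∏ j ∈ Finset.range (kof (σp i)), u ((σp ^ j) (rep i)))
        / lamR (rep i) ^ kof (σp i) := by rw [htdef]; simp only [hrepσ]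
    have hti : t i = (∏ j ∈ Finset.range (kof i), u ((σp ^ j) (rep i)))
        / lamR (rep i) ^ kof i := rfl
    have hle : kof i + 1 ≤ perR (rep i) := hkof_lt i
    rcases lt_or_eq_of_le hle with hlt | heq
    · have hkσ : kof (σp i) = kof i + 1 := by
        apply hkof_eq
        · rw [hrepσ, pow_succ', Equiv.Perm.mul_apply, hkof]
        · intro k' hk' hcon
          rw [hrepσ] at hcon
          match k', hk', hcon with
          | 0, hk', hcon =>
            have hcon' : rep i = σp i := by simpa using hcon
            have hfix : (σp ^ (kof i + 1)) (rep i) = rep i := by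
              rw [pow_succ', Equiv.Perm.mul_apply, hkof, hcon']
            exact hper_min (rep i) (kof i + 1) (Nat.succ_pos _) hlt hfix
          | (k'' + 1), hk', hcon =>
            have h'' : (σp ^ k'') (rep i) = i := by
              apply σp.injective
              rw [← Equiv.Perm.mul_apply, ← pow_succ']; exact hcon
            exact hkof_min i k'' (by omega) h''
      rw [htσ, hkσ, hti, Finset.prod_range_succ, hkof, hlami]
      field_simp
      rw [div_eq_div_iff (pow_ne_zero _ (hlamRne (rep i))) (pow_ne_zero _ (hlamRne (rep i)))]
      ring
    · have hfix : σp i = rep i := by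
        have h1 : (σp ^ (kof i + 1)) (rep i) = rep i := by rw [heq]; exact hper_fix _
        rw [pow_succ', Equiv.Perm.mul_apply, hkof] at h1
        exact h1
      have hkσ : kof (σp i) = 0 := by
        apply hkof_eq
        · rw [hrepσ, hfix]; rfl
        · intro k hk; omega
      rw [htσ, hkσ, hlami]
      simp only [Finset.prod_range_zero, pow_zero, div_one]
      have hprod : u i * ∏ j ∈ Finset.range (kof i), u ((σp ^ j) (rep i)) = PR (rep i) := by
        rw [hPRdef]
        simp only [← heq, Finset.prod_range_succ, ← hui]
        ring
      have hlam' : lamR (rep i) ^ (kof i + 1) = PR (rep i) := by rw [heq]; exact hlamR _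
      rw [hti]
      have hstep : u i * ((∏ j ∈ Finset.range (kof i), u ((σp ^ j) (rep i))) / lamR (rep i) ^ kof i)
          = (u i * ∏ j ∈ Finset.range (kof i), u ((σp ^ j) (rep i))) / lamR (rep i) ^ kof i := by
        ring
      rw [hstep, hprod, ← hlam', div_eq_iff (pow_ne_zero _ (hlamRne _))]
      ring
  · intro i j h
    rw [hlami, hlami, hrep_eq i j h]

section CnAux
variable {K : Type} [Field K] {n : ℕ}

lemma toK_comp {X Y Z : Cn K n} (f : X ⟶ Y) (g : Y ⟶ Z) : toK (f ≫ g) = toK f * toK g := rfl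

lemma toK_eqToHom {X Y : Cn K n} (p : X = Y) : toK (eqToHom p) = 1 := by subst p; rfl

lemma toK_CnHom (X Y : Cn K n) (r : K) : toK (CnHom X Y r) = r := rfl

end CnAux

/-- **Proposition (existence of good bases).**  If `K` is algebraically closed, then for any
`K`-linear automorphism `σ` of `𝒞ₙ` with object permutation `σp` there is a multiplicative
basis whose transition coefficients `a` for `σ` satisfy (1) `a i j = 1` whenever `i, j`
lie in the same `σp`-orbit and (2) `a i j = a k l` whenever `i, k` lie in the same orbit and
`j, l` lie in the same orbit.  Furthermore (1) implies (2). -/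
theorem stmt10 (K : Type) [Field K] [IsAlgClosed K] (n : ℕ)
    (σ : Cn K n ⥤ Cn K n) (hσl : IsKLinearFunctor K σ)
    (hσa : ∃ σ' : Cn K n ⥤ Cn K n, σ ⋙ σ' = 𝟭 (Cn K n) ∧ σ' ⋙ σ = 𝟭 (Cn K n))
    (σp : Equiv.Perm (Fin n)) (hobj : ∀ i : Cn K n, σ.obj i = σp i) :
    (∃ x a : Cn K n → Cn K n → K,
      (∀ i j, x i j ≠ 0) ∧ (∀ i j k, x i j * x j k = x i k) ∧ (∀ i j, a i j ≠ 0) ∧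
      (∀ i j : Cn K n, σ.map (CnHom j i (x i j)) =
        CnHom (σ.obj j) (σ.obj i) (a i j * x (σp i) (σp j))) ∧
      (∀ i j : Fin n, SameOrbit σp i j → a i j = 1) ∧
      (∀ i j k l : Fin n, SameOrbit σp i k → SameOrbit σp j l → a i j = a k l)) ∧
    (∀ x a : Cn K n → Cn K n → K,
      (∀ i j, x i j ≠ 0) → (∀ i j k, x i j * x j k = x i k) → (∀ i j, a i j ≠ 0) →
      (∀ i j : Cn K n, σ.map (CnHom j i (x i j)) =
        CnHom (σ.obj j) (σ.obj i) (a i j * x (σp i) (σp j))) →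
      (∀ i j : Fin n, SameOrbit σp i j → a i j = 1) →
      (∀ i j k l : Fin n, SameOrbit σp i k → SameOrbit σp j l → a i j = a k l)) := by
  classical
  set c : Fin n → Fin n → K := fun i j => toK (σ.map (CnHom j i 1)) with hcdef
  have hmap : ∀ (i j : Cn K n) (r : K),
      σ.map (CnHom j i r) = CnHom (σ.obj j) (σ.obj i) (r * c i j) := by
    intro i j r
    have h1 : CnHom j i r = r • CnHom j i (1 : K) := by
      show r = r * 1; rw [mul_one]
    rw [h1, hσl.2 j i r (CnHom j i 1)]
    rfl
  have hcc : ∀ i : Cn K n, c i i = 1 := by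
    intro i
    show toK (σ.map (CnHom i i 1)) = 1
    have h : CnHom i i (1 : K) = 𝟙 i := rfl
    rw [h, σ.map_id]
    rfl
  have hco : ∀ i j k : Cn K n, c i j * c j k = c i k := by
    intro i j k
    have hcomp : (CnHom k j (1 : K) ≫ CnHom j i 1) = CnHom k i 1 := by
      show (1 : K) * 1 = 1; rw [mul_one]
    have h2 := σ.map_comp (CnHom k j (1 : K)) (CnHom j i (1 : K))
    rw [hcomp] at h2
    have h4 : c i k = c j k * c i j := congrArg toK h2
    rw [h4]; ring
  obtain ⟨σ', hσ'1, hσ'2⟩ := hσa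
  have hkey : ∀ (i j : Cn K n) (r : K), toK ((σ ⋙ σ').map (CnHom j i r)) = r := by
    intro i j r
    rw [Functor.congr_hom hσ'1 (CnHom j i r)]
    rw [toK_comp, toK_comp, toK_eqToHom, toK_eqToHom, Functor.id_map]
    show 1 * (r * 1) = r
    ring
  have hcne : ∀ i j : Cn K n, c i j ≠ 0 := by
    intro i j hc
    have e0 : σ.map (CnHom j i (1 : K)) = σ.map (CnHom j i (0 : K)) := by
      rw [hmap i j 1, hmap i j 0]
      show (1 : K) * c i j = (0 : K) * c i j
      rw [hc]; ring
    have e1 : (σ ⋙ σ').map (CnHom j i (1 : K)) = (σ ⋙ σ').map (CnHom j i (0 : K)) := by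
      show σ'.map (σ.map (CnHom j i (1 : K))) = σ'.map (σ.map (CnHom j i (0 : K)))
      rw [e0]
    have h10 : (1 : K) = 0 := by
      rw [← hkey i j 1, ← hkey i j 0, e1]
    exact one_ne_zero h10
  constructor
  · rcases Nat.eq_zero_or_pos n with hn | hn
    · subst hn
      haveI : IsEmpty (Cn K 0) := inferInstanceAs (IsEmpty (Fin 0))
      haveI : IsEmpty (Fin 0) := inferInstance
      refine ⟨fun _ _ => 1, fun _ _ => 1, fun i => isEmptyElim i, fun i => isEmptyElim i,
        fun i => isEmptyElim i, fun i => isEmptyElim i, fun i => isEmptyElim i,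
        fun i => isEmptyElim i⟩
    · set i₀ : Fin n := ⟨0, hn⟩
      set u : Fin n → K := fun i => c i i₀ with hudef
      have hune : ∀ i, u i ≠ 0 := fun i => hcne i i₀
      have hcij : ∀ i j : Fin n, c i j = u i * (u j)⁻¹ := by
        intro i j
        rw [eq_mul_inv_iff_mul_eq₀ (hune j)]
        exact hco i j i₀
      obtain ⟨t, lam, htne, hlamne, hrec, hlamorb⟩ := key_tlam σp u hune
      refine ⟨fun i j => t i * (t j)⁻¹, fun i j => lam i * (lam j)⁻¹, ?_, ?_, ?_, ?_, ?_, ?_⟩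
      · exact fun i j => mul_ne_zero (htne i) (inv_ne_zero (htne j))
      · intro i j k
        show t i * (t j)⁻¹ * (t j * (t k)⁻¹) = t i * (t k)⁻¹
        field_simp [htne i, htne j, htne k]
      · exact fun i j => mul_ne_zero (hlamne i) (inv_ne_zero (hlamne j))
      · intro i j
        rw [hmap i j (t i * (t j)⁻¹)]
        show (t i * (t j)⁻¹) * c i j
            = (lam i * (lam j)⁻¹) * (t (σp i) * (t (σp j))⁻¹)
        have h1 : t (σp i) = u i * t i * (lam i)⁻¹ := by
          rw [eq_mul_inv_iff_mul_eq₀ (hlamne i), mul_comm]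
          exact (hrec i).symm
        have h2 : t (σp j) = u j * t j * (lam j)⁻¹ := by
          rw [eq_mul_inv_iff_mul_eq₀ (hlamne j), mul_comm]
          exact (hrec j).symm
        rw [hcij i j, h1, h2]
        field_simp [htne i, htne j, hune i, hune j, hlamne i, hlamne j]
      · intro i j hij
        show lam i * (lam j)⁻¹ = 1
        rw [hlamorb i j hij]
        exact mul_inv_cancel₀ (hlamne j)
      · intro i j k l hik hjl
        show lam i * (lam j)⁻¹ = lam k * (lam l)⁻¹
        rw [hlamorb i k hik, hlamorb j l hjl]
  · intro x a hx0 hxm ha0 hmapa h1 i j k l hik hjl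
    have hcoc : ∀ p q r : Fin n, a p r = a p q * a q r := by
      intro p q r
      have hcomp : (CnHom r q (x q r) ≫ CnHom q p (x p q)) = CnHom r p (x p r) := by
        show x q r * x p q = x p r
        rw [mul_comm]; exact hxm p q r
      have h2 := σ.map_comp (CnHom r q (x q r)) (CnHom q p (x p q))
      rw [hcomp, hmapa p r, hmapa q r, hmapa p q] at h2
      have h3 : a p r * x (σp p) (σp r)
          = (a q r * x (σp q) (σp r)) * (a p q * x (σp p) (σp q)) := h2
      have h4 : x (σp p) (σp q) * x (σp q) (σp r) = x (σp p) (σp r) := hxm _ _ _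
      have h5 : a p r * x (σp p) (σp r) = (a p q * a q r) * x (σp p) (σp r) := by
        rw [h3, ← h4]; ring
      exact mul_right_cancel₀ (hx0 _ _) h5
    calc a i j = a i k * a k j := hcoc i k j
      _ = a k j := by rw [h1 i k hik, one_mul]
      _ = a k l * a l j := hcoc k l j
      _ = a k l := by rw [h1 l j (sameOrbit_symm σp hjl), mul_one]
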